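/- Let C ≤ F_q^n be an LRC with dimension k and locality r. Then for all 1 ≤ i ≤ k, μ_i(C) ≥ ⌈(k - (i-1))/r⌉, where μ_i(C) := min{t : d_t(C^⊥) ≥ k - i + 1 + t}. -/

import Mathlib

open Finset

variable {F : Type*} [Field F] [Fintype F] [DecidableEq F]

/-- Hamming weight of a vector. -/
def wt {n : ℕ} (x : Fin n → F) : ℕ := (Finset.univ.filter fun i => x i ≠ 0).card

/-- Support of a vector, as a finset. -/
def supp {n : ℕ} (x : Fin n → F) : Finset (Fin n) := Finset.univ.filter fun i => x i ≠ 0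

/-- The dual code with respect to the standard bilinear form. -/
def dualCode {ι : Type*} [Fintype ι] (C : Submodule F (ι → F)) : Submodule F (ι → F) where
  carrier := {x | ∀ y ∈ C, ∑ i, x i * y i = 0}
  add_mem' := by
    intro a b ha hb y hy
    simp only [Set.mem_setOf_eq] at *
    simp only [Pi.add_apply, add_mul, Finset.sum_add_distrib, ha y hy, hb y hy, add_zero]
  zero_mem' := by intro y hy; simp
  smul_mem' := by
    intro c a ha y hy
    simp only [Set.mem_setOf_eq] at *
    simp only [Pi.smul_apply, smul_eq_mul, mul_assoc, ← Finset.mul_sum, ha y hy, mul_zero]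

/-- Refined weight enumerator `W_i^S(C)`. -/
noncomputable def W {n : ℕ} (C : Submodule F (Fin n → F)) (i : ℕ) (S : Finset (Fin n)) : ℕ :=
  Set.ncard {x : Fin n → F | x ∈ C ∧ wt x = i ∧ S ⊆ supp x}

/-- Shortening of a code to a set of coordinates. -/
def shortening {ι : Type*} [Fintype ι] (C : Submodule F (ι → F)) (S : Finset ι) :
    Submodule F (ι → F) where
  carrier := {x | x ∈ C ∧ ∀ i, i ∉ S → x i = 0}
  add_mem' := by
    rintro a b ⟨ha, ha0⟩ ⟨hb, hb0⟩
    exact ⟨C.add_mem ha hb, fun i hi => by simp [ha0 i hi, hb0 i hi]⟩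
  zero_mem' := ⟨C.zero_mem, fun i _ => rfl⟩
  smul_mem' := by
    rintro c a ⟨ha, ha0⟩
    exact ⟨C.smul_mem c ha, fun i hi => by simp [ha0 i hi]⟩

/-- Projection (puncturing) onto the coordinates indexed by `S`. -/
def projMap {ι : Type*} [Fintype ι] (S : Finset ι) : (ι → F) →ₗ[F] ({ i // i ∈ S } → F) :=
  LinearMap.funLeft F F Subtype.val

/-- The `i`-th generalized Hamming weight of a code. -/
noncomputable def genWeight {n : ℕ} (C : Submodule F (Fin n → F)) (i : ℕ) : ℕ :=
  sInf {w | ∃ D : Submodule F (Fin n → F), D ≤ C ∧ Module.finrank F D = i ∧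
    Set.ncard {j : Fin n | ∃ x ∈ D, x j ≠ 0} = w}

/-- A code is nondegenerate if no coordinate vanishes identically. -/
def Nondegenerate {n : ℕ} (C : Submodule F (Fin n → F)) : Prop :=
  ∀ i : Fin n, ∃ x ∈ C, x i ≠ 0

/-- A code has locality `r`. -/
def HasLocality {n : ℕ} (C : Submodule F (Fin n → F)) (r : ℕ) : Prop :=
  ∀ i : Fin n, ∃ S : Finset (Fin n), i ∉ S ∧ S.card ≤ r ∧
    ∀ x ∈ C, ∀ y ∈ C, (∀ j ∈ S, x j = y j) → x i = y i

/-- A nondegenerate code has locality `(r, δ)`. -/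
def HasLocalityRD {n : ℕ} (C : Submodule F (Fin n → F)) (r δ : ℕ) : Prop :=
  (∀ i : Fin n, ∃ x ∈ C, x i ≠ 0) ∧
  ∀ i : Fin n, ∃ S : Finset (Fin n), i ∉ S ∧ S.card ≤ r + δ ∧
    ∀ x ∈ C, (∃ j ∈ insert i S, x j ≠ 0) →
      δ ≤ ((insert i S).filter fun j => x j ≠ 0).card

/-!
Locality writes each coordinate `x i` of a codeword as a linear combination of the coordinates
in its recovery set `S`, i.e. there is a dual codeword supported on `insert i S` and nonzero at
`i`, of weight at most `r + 1`. Adding such light dual codewords greedily, each time through a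
coordinate not yet covered (or arbitrarily once everything is covered), yields for every
`t ≤ dim C^⊥` a `t`-dimensional subcode of `C^⊥` with support of size at most `t (r + 1)`; hence
`d_t(C^⊥) ≤ t (r + 1)`. At `t = μ_i(C)` this gives `k - i + 1 + t ≤ t (r + 1)`, i.e.
`t ≥ (k - i + 1) / r`. The minimum defining `μ_i(C)` exists because `d_{n-k}(C^⊥) = n`.
-/

open Module

section
variable {K : Type*} [Field K]

lemma dualCode_eq_comap_dualAnnihilator {ι : Type*} [Fintype ι] [DecidableEq ι]
    (C : Submodule K (ι → K)) :
    dualCode C = C.dualAnnihilator.comap (dotProductEquiv K ι).toLinearMap := by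
  ext x
  simp [dualCode, Submodule.mem_dualAnnihilator, dotProduct]

lemma finrank_dualCode {ι : Type*} [Fintype ι] [DecidableEq ι] (C : Submodule K (ι → K)) :
    finrank K (dualCode C) = Fintype.card ι - finrank K C := by
  rw [dualCode_eq_comap_dualAnnihilator, Submodule.comap_equiv_eq_map_symm,
    LinearEquiv.finrank_map_eq]
  have := Subspace.finrank_add_finrank_dualAnnihilator_eq C
  rw [Module.finrank_fintype_fun_eq_card] at this
  omega

lemma HasLocality.exists_linear_recovery {n r : ℕ} {C : Submodule K (Fin n → K)}
    (hloc : HasLocality C r) (i : Fin n) :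
    ∃ S : Finset (Fin n), i ∉ S ∧ S.card ≤ r ∧
      ∃ c : S → K, ∀ y ∈ C, y i = ∑ s : S, c s * y s := by
  obtain ⟨S, hiS, hS, hrec⟩ := hloc i
  let coord (j : Fin n) : C →ₗ[K] K := (LinearMap.proj j).comp C.subtype
  have hker : ⨅ s : S, LinearMap.ker (coord s) ≤ LinearMap.ker (coord i) := by
    intro z hz
    simp only [Submodule.mem_iInf, LinearMap.mem_ker] at hz
    exact hrec z z.2 0 C.zero_mem fun j hj => hz ⟨j, hj⟩
  obtain ⟨c, hc⟩ :=
    (Submodule.mem_span_range_iff_exists_fun K).1 (mem_span_of_iInf_ker_le_ker hker)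
  refine ⟨S, hiS, hS, c, fun y hy => ?_⟩
  simpa [coord, mul_comm] using (LinearMap.congr_fun hc ⟨y, hy⟩).symm

lemma HasLocality.exists_mem_dualCode [DecidableEq K] {n r : ℕ} {C : Submodule K (Fin n → K)}
    (hloc : HasLocality C r) (i : Fin n) :
    ∃ h ∈ dualCode C, h i ≠ 0 ∧ wt h ≤ r + 1 := by
  obtain ⟨S, hiS, hS, c, hc⟩ := hloc.exists_linear_recovery i
  have hne (s : S) : (s : Fin n) ≠ i := fun h => hiS (h ▸ s.2)
  set h : Fin n → K := Pi.single i 1 - ∑ s : S, c s • Pi.single (s : Fin n) 1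
  have hsupp (j : Fin n) (hj : j ∉ insert i S) : h j = 0 := by
    rw [Finset.mem_insert, not_or] at hj
    have (s : S) : (s : Fin n) ≠ j := fun h => hj.2 (h ▸ s.2)
    simp [h, hj.1, this]
  refine ⟨h, fun y hy => ?_, by simp [h, hne], ?_⟩
  · show h ⬝ᵥ y = 0
    simp only [h, sub_dotProduct, sum_dotProduct, smul_dotProduct, single_dotProduct, one_mul,
      smul_eq_mul]
    rw [← hc y hy, sub_self]
  · calc wt h ≤ (insert i S).card := Finset.card_le_card fun j hj =>
          by_contra fun hj' => (Finset.mem_filter.1 hj).2 (hsupp j hj')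
      _ ≤ r + 1 := (Finset.card_insert_le i S).trans (by omega)

def codeSupport {ι : Type*} (D : Submodule K (ι → K)) : Set ι := {j | ∃ x ∈ D, x j ≠ 0}

lemma codeSupport_sup_span_singleton_subset {ι : Type*} (D : Submodule K (ι → K)) (h : ι → K) :
    codeSupport (D ⊔ K ∙ h) ⊆ codeSupport D ∪ {j | h j ≠ 0} := by
  rintro j ⟨x, hx, hxj⟩
  obtain ⟨d, hd, e, he, rfl⟩ := Submodule.mem_sup.1 hx
  obtain ⟨a, rfl⟩ := Submodule.mem_span_singleton.1 he
  by_cases hdj : d j = 0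
  · right
    simp_all
  · exact Or.inl ⟨d, hd, hdj⟩

lemma genWeight_finrank_le {n : ℕ} {C D : Submodule K (Fin n → K)} (hD : D ≤ C) :
    genWeight C (finrank K D) ≤ (codeSupport D).ncard :=
  Nat.sInf_le ⟨D, hD, rfl, rfl⟩

lemma genWeight_finrank_self {n : ℕ} (C : Submodule K (Fin n → K)) :
    genWeight C (finrank K C) = (codeSupport C).ncard := by
  have : {w | ∃ D ≤ C, finrank K D = finrank K C ∧
      Set.ncard {j : Fin n | ∃ x ∈ D, x j ≠ 0} = w} = {(codeSupport C).ncard} := by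
    ext w
    constructor
    · rintro ⟨D, hDC, hD, rfl⟩
      rw [Submodule.eq_of_le_of_finrank_eq hDC hD]
      rfl
    · rintro rfl
      exact ⟨C, le_rfl, rfl, rfl⟩
  rw [genWeight, this, csInf_singleton]

section Greedy
variable [DecidableEq K] {n w : ℕ} {C : Submodule K (Fin n → K)}

lemma wt_eq_ncard (x : Fin n → K) : wt x = {j | x j ≠ 0}.ncard := by
  simp [wt, ← Set.ncard_coe_finset]

lemma exists_ncard_codeSupport_sup_span_singleton_le
    (hcover : ∀ j, ∃ h ∈ C, h j ≠ 0 ∧ wt h ≤ w) {D : Submodule K (Fin n → K)} (hDC : D < C) :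
    ∃ h ∈ C, h ∉ D ∧ (codeSupport (D ⊔ K ∙ h)).ncard ≤ (codeSupport D).ncard + w := by
  by_cases hfull : codeSupport D = Set.univ
  · obtain ⟨h, hhC, hhD⟩ := SetLike.exists_of_lt hDC
    refine ⟨h, hhC, hhD, ?_⟩
    calc (codeSupport (D ⊔ K ∙ h)).ncard ≤ (Set.univ : Set (Fin n)).ncard :=
          Set.ncard_le_ncard (Set.subset_univ _)
      _ ≤ (codeSupport D).ncard + w := by rw [hfull]; omega
  · obtain ⟨j, hj⟩ := (Set.ne_univ_iff_exists_notMem _).1 hfull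
    obtain ⟨h, hhC, hhj, hwt⟩ := hcover j
    refine ⟨h, hhC, fun hhD => hj ⟨h, hhD, hhj⟩, ?_⟩
    calc (codeSupport (D ⊔ K ∙ h)).ncard ≤ (codeSupport D ∪ {j | h j ≠ 0}).ncard :=
          Set.ncard_le_ncard (codeSupport_sup_span_singleton_subset D h)
      _ ≤ (codeSupport D).ncard + {j | h j ≠ 0}.ncard := Set.ncard_union_le _ _
      _ ≤ (codeSupport D).ncard + w := by rw [← wt_eq_ncard]; omega

lemma exists_le_finrank_eq_ncard_codeSupport_le (hcover : ∀ j, ∃ h ∈ C, h j ≠ 0 ∧ wt h ≤ w)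
    {t : ℕ} (ht : t ≤ finrank K C) :
    ∃ D ≤ C, finrank K D = t ∧ (codeSupport D).ncard ≤ t * w := by
  induction t with
  | zero => exact ⟨⊥, bot_le, finrank_bot K _, by simp [codeSupport]⟩
  | succ t ih =>
    obtain ⟨D, hDC, hD, hsupp⟩ := ih (by omega)
    have hlt : D < C := lt_of_le_of_ne hDC fun h => by rw [h] at hD; omega
    obtain ⟨h, hhC, hhD, hh⟩ := exists_ncard_codeSupport_sup_span_singleton_le hcover hlt
    refine ⟨D ⊔ K ∙ h, sup_le hDC ((Submodule.span_singleton_le_iff_mem h C).2 hhC),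
      by rw [Submodule.finrank_sup_span_singleton hhD, hD], ?_⟩
    rw [add_mul, one_mul]
    omega

lemma genWeight_le_mul (hcover : ∀ j, ∃ h ∈ C, h j ≠ 0 ∧ wt h ≤ w) {t : ℕ}
    (ht : t ≤ finrank K C) : genWeight C t ≤ t * w := by
  obtain ⟨D, hDC, rfl, hsupp⟩ := exists_le_finrank_eq_ncard_codeSupport_le hcover ht
  exact (genWeight_finrank_le hDC).trans hsupp

end Greedy

end

lemma ceil_div_le_of_le_mul {α : Type*} [Field α] [LinearOrder α] [IsStrictOrderedRing α]
    [FloorRing α] {a r t : ℕ} (h : a ≤ r * t) : ⌈(a : α) / r⌉ ≤ t := by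
  rw [Int.ceil_le, Int.cast_natCast]
  exact div_le_of_le_mul₀ r.cast_nonneg t.cast_nonneg (by rw [mul_comm]; exact_mod_cast h)

/-- for an LRC of dimension `k` and locality `r`,
`μ_i(C) ≥ ⌈(k - (i-1))/r⌉` for `1 ≤ i ≤ k`. -/
theorem stmt15 {n : ℕ} (C : Submodule F (Fin n → F)) (k r i : ℕ)
    (hloc : HasLocality C r) (hk : Module.finrank F C = k)
    (hi1 : 1 ≤ i) (hik : i ≤ k) :
    ⌈((k : ℚ) - ((i : ℚ) - 1)) / (r : ℚ)⌉ ≤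
      ((sInf {t : ℕ | k - i + 1 + t ≤ genWeight (dualCode C) t} : ℕ) : ℤ) := by
  have hcover := hloc.exists_mem_dualCode
  have hdim : finrank F (dualCode C) = n - k := by rw [finrank_dualCode, hk, Fintype.card_fin]
  have hkn : k ≤ n := hk ▸ (Submodule.finrank_le C).trans_eq (finrank_fin_fun F)
  have hsupp : codeSupport (dualCode C) = Set.univ :=
    Set.eq_univ_of_forall fun j => (hcover j).imp fun _ h => ⟨h.1, h.2.1⟩
  have hfull : genWeight (dualCode C) (n - k) = n := by
    rw [← hdim, genWeight_finrank_self, hsupp, Set.ncard_univ, Nat.card_fin]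
  set t := sInf {t : ℕ | k - i + 1 + t ≤ genWeight (dualCode C) t}
  have hnk : n - k ∈ {t : ℕ | k - i + 1 + t ≤ genWeight (dualCode C) t} := by
    simp only [Set.mem_setOf_eq, hfull]
    omega
  have ht : k - i + 1 + t ≤ genWeight (dualCode C) t := Nat.sInf_mem ⟨_, hnk⟩
  have htle : t ≤ finrank F (dualCode C) := hdim ▸ Nat.sInf_le hnk
  have hkey : k - i + 1 ≤ r * t := by
    have := ht.trans (genWeight_le_mul hcover htle)
    rw [mul_add, mul_one, mul_comm] at this
    omega
  have hcast : (k : ℚ) - ((i : ℚ) - 1) = ((k - i + 1 : ℕ) : ℚ) := by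
    rw [Nat.cast_add, Nat.cast_sub hik]
    ring
  rw [hcast]
  exact ceil_div_le_of_le_mul hkey
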